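/- Let (P, x_L, x_R) be a finite oriented poset with weight function w into a commutative ring R, and let S' be the set of lower sets I of P satisfying (x_L ∈ I implies x_R ∈ I). Then loop_t(M_w(P↗)) = [[Σ_{I ∈ S'} w(I), −Σ_{I ∈ S', x_L ∈ I} w(I)], [Σ_{I ∈ S', x_L ∉ I} w(I), 0]]. In other words, loop_t applied to the up weight matrix of (P, x_L, x_R) equals the down weight matrix of the target-looped oriented poset ◁(P↗), obtained by adding the relation x_R ≤ x_L to P and taking both distinguished vertices to be x_L. -/
import Mathlib


open Classical Relation

noncomputable section

variable {R : Type*} [CommRing R]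

/-- A finite set `I` is a lower set (order ideal) for the relation `r`. -/
def IsLowerSetRel {α : Type*} (r : α → α → Prop) (I : Finset α) : Prop :=
  ∀ x ∈ I, ∀ y, r y x → y ∈ I

/-- The sum of the weights `∏ i ∈ I, w i` over all lower sets `I` of the relation `r`
satisfying the condition `C`.  Taking `C = fun _ => True` gives the weight polynomial. -/
def wSum {α : Type*} [Fintype α] (r : α → α → Prop) (w : α → R) (C : Finset α → Prop) : R :=
  ∑ I ∈ Finset.univ.filter (fun I : Finset α => IsLowerSetRel r I ∧ C I), ∏ i ∈ I, w i

/-- The down weight matrix `M_w(P↘)` of an oriented poset `(P, xL, xR)`. -/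
def downMat {α : Type*} [Fintype α] (r : α → α → Prop) (w : α → R) (xL xR : α) :
    Matrix (Fin 2) (Fin 2) R :=
  !![wSum r w (fun _ => True), -wSum r w (fun I => xR ∈ I);
     wSum r w (fun I => xL ∉ I), -wSum r w (fun I => xR ∈ I ∧ xL ∉ I)]

/-- The up weight matrix `M_w(P↗)` of an oriented poset `(P, xL, xR)`. -/
def upMat {α : Type*} [Fintype α] (r : α → α → Prop) (w : α → R) (xL xR : α) :
    Matrix (Fin 2) (Fin 2) R :=
  !![wSum r w (fun I => xR ∈ I), wSum r w (fun I => xR ∉ I);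
     wSum r w (fun I => xR ∈ I ∧ xL ∉ I), wSum r w (fun I => xR ∉ I ∧ xL ∉ I)]

/-- The order relation of the glued poset `P↘Q` on the disjoint union `P ⊔ Q`:
elements of `P` (resp. `Q`) compare as in `P` (resp. `Q`), an element `a ∈ Q` lies below
`b ∈ P` iff `a ≤ yL` in `Q` and `xR ≤ b` in `P`, and no element of `P` lies below an
element of `Q`. -/
def glueDown {α β : Type*} (rP : α → α → Prop) (rQ : β → β → Prop) (xR : α) (yL : β) :
    α ⊕ β → α ⊕ β → Prop
  | .inl a, .inl b => rP a b
  | .inr a, .inr b => rQ a b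
  | .inr a, .inl b => rQ a yL ∧ rP xR b
  | .inl _, .inr _ => False

/-- The order relation of the glued poset `P↗Q` on the disjoint union `P ⊔ Q`:
elements of `P` (resp. `Q`) compare as in `P` (resp. `Q`), an element `a ∈ P` lies below
`b ∈ Q` iff `a ≤ xR` in `P` and `yL ≤ b` in `Q`, and no element of `Q` lies below an
element of `P`. -/
def glueUp {α β : Type*} (rP : α → α → Prop) (rQ : β → β → Prop) (xR : α) (yL : β) :
    α ⊕ β → α ⊕ β → Prop
  | .inl a, .inl b => rP a b
  | .inr a, .inr b => rQ a b
  | .inl a, .inr b => rP a xR ∧ rQ yL b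
  | .inr _, .inl _ => False
/-- `loop_t` on 2×2 matrices: `[[a,b],[c,d]] ↦ [[a+d, c−a],[c+d, 0]]`. -/
def loopTM (M : Matrix (Fin 2) (Fin 2) R) : Matrix (Fin 2) (Fin 2) R :=
  !![M 0 0 + M 1 1, M 1 0 - M 0 0; M 1 0 + M 1 1, 0]


lemma wSum_congr {α : Type*} [Fintype α] (r : α → α → Prop) (w : α → R)
    {C C' : Finset α → Prop} (h : ∀ I, C I ↔ C' I) : wSum r w C = wSum r w C' := by
  have : C = C' := funext fun I => propext (h I)
  rw [this]

lemma wSum_rel_congr {α : Type*} [Fintype α] {r r' : α → α → Prop} (w : α → R)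
    {C C' : Finset α → Prop} (h : ∀ I, IsLowerSetRel r I ∧ C I ↔ IsLowerSetRel r' I ∧ C' I) :
    wSum r w C = wSum r' w C' := by
  unfold wSum
  congr 1
  apply Finset.filter_congr
  intro I _
  simp only [h I]

lemma wSum_split {α : Type*} [Fintype α] (r : α → α → Prop) (w : α → R)
    (C D : Finset α → Prop) :
    wSum r w C = wSum r w (fun I => C I ∧ D I) + wSum r w (fun I => C I ∧ ¬ D I) := by
  unfold wSum
  rw [← Finset.sum_filter_add_sum_filter_not
      (Finset.univ.filter fun I : Finset α => IsLowerSetRel r I ∧ C I) D]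
  congr 1 <;> refine Finset.sum_congr ?_ (fun _ _ => rfl) <;> ext I <;>
    simp only [Finset.mem_filter, Finset.mem_univ, true_and] <;> tauto

lemma wSum_false {α : Type*} [Fintype α] (r : α → α → Prop) (w : α → R)
    {C : Finset α → Prop} (h : ∀ I, ¬ C I) : wSum r w C = 0 := by
  unfold wSum
  rw [Finset.filter_false_of_mem (fun I _ hI => h I hI.2)]
  · simp

lemma lowerSet_closure {α : Type*} [PartialOrder α] (xL xR : α) (I : Finset α) :
    IsLowerSetRel (ReflTransGen (fun a b : α => a ≤ b ∨ (a = xR ∧ b = xL))) I ↔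
      IsLowerSetRel (· ≤ ·) I ∧ (xL ∈ I → xR ∈ I) := by
  constructor
  · intro h
    refine ⟨fun x hx y hyx => h x hx y (ReflTransGen.single (Or.inl hyx)), fun hL => ?_⟩
    exact h xL hL xR (ReflTransGen.single (Or.inr ⟨rfl, rfl⟩))
  · rintro ⟨hlow, hLR⟩ x hx y hyx
    induction hyx using ReflTransGen.head_induction_on with
    | refl => exact hx
    | head hs _ ih =>
      rcases hs with h1 | ⟨rfl, rfl⟩
      · exact hlow _ ih _ h1
      · exact hLR ih

/-- `loop_t(M_w(P↗))` is the matrix of sums over lower sets `I` with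
`xL ∈ I → xR ∈ I`; that is, the down weight matrix of the target-looped oriented poset
`◁(P↗)`, obtained by adding the relation `xR ≤ xL` and taking both vertices to be `xL`. -/
theorem loopTM_upMat {α : Type*} [Fintype α] [PartialOrder α] (w : α → R) (xL xR : α) :
    loopTM (upMat (· ≤ ·) w xL xR) =
      !![wSum (· ≤ ·) w (fun I => xL ∈ I → xR ∈ I),
         -wSum (· ≤ ·) w (fun I => (xL ∈ I → xR ∈ I) ∧ xL ∈ I);
         wSum (· ≤ ·) w (fun I => (xL ∈ I → xR ∈ I) ∧ xL ∉ I), 0] ∧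
    loopTM (upMat (· ≤ ·) w xL xR) =
      downMat (ReflTransGen (fun a b : α => a ≤ b ∨ (a = xR ∧ b = xL))) w xL xL := by
  have key : ∀ C : Finset α → Prop,
      wSum (ReflTransGen (fun a b : α => a ≤ b ∨ (a = xR ∧ b = xL))) w C =
        wSum (· ≤ ·) w (fun I => (xL ∈ I → xR ∈ I) ∧ C I) := by
    intro C
    apply wSum_rel_congr
    intro I
    rw [lowerSet_closure]
    tauto
  have e00 : wSum (· ≤ ·) (R := R) w (fun I => xR ∈ I) +
      wSum (· ≤ ·) w (fun I => xR ∉ I ∧ xL ∉ I) =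
      wSum (· ≤ ·) w (fun I => xL ∈ I → xR ∈ I) := by
    rw [wSum_split (· ≤ ·) w (fun I => xL ∈ I → xR ∈ I) (fun I => xR ∈ I)]
    congr 1
    · apply wSum_congr; intro I; tauto
    · apply wSum_congr; intro I; tauto
  have e01 : wSum (· ≤ ·) (R := R) w (fun I => xR ∈ I ∧ xL ∉ I) -
      wSum (· ≤ ·) w (fun I => xR ∈ I) =
      -wSum (· ≤ ·) w (fun I => (xL ∈ I → xR ∈ I) ∧ xL ∈ I) := by
    rw [wSum_split (· ≤ ·) w (fun I => xR ∈ I) (fun I => xL ∉ I)]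
    have : wSum (· ≤ ·) (R := R) w (fun I => xR ∈ I ∧ ¬xL ∉ I) =
        wSum (· ≤ ·) w (fun I => (xL ∈ I → xR ∈ I) ∧ xL ∈ I) := by
      apply wSum_congr; intro I; tauto
    rw [this]; ring
  have e10 : wSum (· ≤ ·) (R := R) w (fun I => xR ∈ I ∧ xL ∉ I) +
      wSum (· ≤ ·) w (fun I => xR ∉ I ∧ xL ∉ I) =
      wSum (· ≤ ·) w (fun I => (xL ∈ I → xR ∈ I) ∧ xL ∉ I) := by
    rw [wSum_split (· ≤ ·) w (fun I => (xL ∈ I → xR ∈ I) ∧ xL ∉ I) (fun I => xR ∈ I)]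
    congr 1
    · apply wSum_congr; intro I; tauto
    · apply wSum_congr; intro I; tauto
  have h1 : loopTM (upMat (· ≤ ·) w xL xR) =
      !![wSum (· ≤ ·) w (fun I => xL ∈ I → xR ∈ I),
         -wSum (· ≤ ·) w (fun I => (xL ∈ I → xR ∈ I) ∧ xL ∈ I);
         wSum (· ≤ ·) w (fun I => (xL ∈ I → xR ∈ I) ∧ xL ∉ I), 0] := by
    unfold loopTM upMat
    ext i j
    fin_cases i <;> fin_cases j <;>
      simp [Matrix.cons_val_zero, Matrix.cons_val_one, e00, e01, e10]
  refine ⟨h1, ?_⟩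
  rw [h1]
  unfold downMat
  rw [key, key, key]
  have hTrue : wSum (· ≤ ·) (R := R) w (fun I => (xL ∈ I → xR ∈ I) ∧ True) =
      wSum (· ≤ ·) w (fun I => xL ∈ I → xR ∈ I) := by
    apply wSum_congr; intro I; tauto
  have hzero : wSum (· ≤ ·) (R := R) w (fun I => (xL ∈ I → xR ∈ I) ∧ xL ∈ I ∧ xL ∉ I) = 0 :=
    wSum_false _ _ (fun I => by tauto)
  ext i j
  fin_cases i <;> fin_cases j <;> simp [hTrue, hzero] <;>
    exact wSum_false _ _ (fun I h => h)
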